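/- arXiv:2203.06913 — 4 statements merged into one kernel-verified Lean document; each statement's English description precedes it below -/
import Mathlib

section
/- Let Q be a query graph with no isolated vertices, and let G and G' be data graphs on the same vertex set with the same vertex labeling, E(G) ⊆ E(G'), identical edge labels on common edges, and Δ = E(G') \ E(G) the inserted edges. Fix an enumeration e_1,…,e_n of E(Q) with e_k = {x_k,y_k}; let R_k = {(v,v') : {v,v'} ∈ E(G'), L(x_k)=L(v), L(y_k)=L(v'), L(e_k)=L({v,v'})} and ΔR_k = {(v,v') ∈ R_k : {v,v'} ∈ Δ}. For each k let ΔQ_k be the set of maps M : V(Q) → V(G') with (M(x_i),M(y_i)) ∈ R_i for all i < k, (M(x_k),M(y_k)) ∈ ΔR_k, and (M(x_i),M(y_i)) ∈ R_i \ ΔR_i for all i > k. Then ⋃_{k=1}^{n} ΔQ_k equals the set of homomorphisms of Q in G' that are not homomorphisms of Q in G (the positive matches), and the sets ΔQ_k are pairwise disjoint. -/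
/-!
A match of `Q` is a choice of one data-graph pair per query edge `e_k`. It is a match in `G'`
exactly when every pair lies in `R_k`, and, being a match in `G'`, it fails to be a match in `G`
exactly when some pair is an inserted edge, i.e. lies in `ΔR_k`. Such a positive match lies in
`ΔQ_k` precisely for the last index `k` whose pair is inserted, so it lies in exactly one `ΔQ_k`.
-/

/-- A homomorphism (match) of a labeled query graph `Q` in a labeled data graph `G`:
a map `M` preserving vertex labels, adjacency, and edge labels. -/
def IsLabeledHom {α β SV SE : Type*} (Q : SimpleGraph α) (G : SimpleGraph β)
    (LQv : α → SV) (LGv : β → SV) (LQe : Sym2 α → SE) (LGe : Sym2 β → SE)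
    (M : α → β) : Prop :=
  (∀ u, LQv u = LGv (M u)) ∧
  ∀ u u', Q.Adj u u' → G.Adj (M u) (M u') ∧ LQe s(u, u') = LGe s(M u, M u')

/-- The pattern defining `ΔQ_k`, with `P i` standing for `∈ R_i` and `D i` for `∈ ΔR_i`. -/
def IsLastMarked {ι : Type*} [LT ι] (P D : ι → Prop) (k : ι) : Prop :=
  (∀ i, i < k → P i) ∧ D k ∧ ∀ i, k < i → P i ∧ ¬ D i

namespace IsLastMarked

variable {ι : Type*} [LinearOrder ι] {P D : ι → Prop}

theorem forall_of_imp (hDP : ∀ i, D i → P i) {k : ι} (hk : IsLastMarked P D k) (i : ι) :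
    P i := by
  obtain ⟨hlt, hDk, hgt⟩ := hk
  rcases lt_trichotomy i k with h | rfl | h
  · exact hlt i h
  · exact hDP i hDk
  · exact (hgt i h).1

theorem unique {j k : ι} (hj : IsLastMarked P D j) (hk : IsLastMarked P D k) : j = k := by
  rcases lt_trichotomy j k with h | h | h
  · exact absurd hk.2.1 (hj.2.2 k h).2
  · exact h
  · exact absurd hj.2.1 (hk.2.2 j h).2

theorem exists_iff [Finite ι] (hDP : ∀ i, D i → P i) :
    (∃ k, IsLastMarked P D k) ↔ (∀ i, P i) ∧ ∃ i, D i := by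
  constructor
  · rintro ⟨k, hk⟩
    exact ⟨hk.forall_of_imp hDP, k, hk.2.1⟩
  · rintro ⟨hP, i, hDi⟩
    obtain ⟨k, hDk, hmax⟩ := Set.exists_max_image {i | D i} id (Set.toFinite _) ⟨i, hDi⟩
    exact ⟨k, fun i _ => hP i, hDk, fun i hki => ⟨hP i, fun hDi => (hmax i hDi).not_gt hki⟩⟩

end IsLastMarked

section EdgeEnumeration

variable {α ι : Type*} {Q : SimpleGraph α} {x y : ι → α}

theorem forall_adj_iff_forall_index {r : α → α → Prop} (hr : ∀ u u', r u u' → r u' u)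
    (hedges : ∀ k, Q.Adj (x k) (y k))
    (hcover : ∀ a b, Q.Adj a b → ∃ k, (x k = a ∧ y k = b) ∨ (x k = b ∧ y k = a)) :
    (∀ u u', Q.Adj u u' → r u u') ↔ ∀ k, r (x k) (y k) := by
  refine ⟨fun h k => h _ _ (hedges k), fun h u u' huu' => ?_⟩
  obtain ⟨k, ⟨rfl, rfl⟩ | ⟨rfl, rfl⟩⟩ := hcover u u' huu'
  · exact h k
  · exact hr _ _ (h k)

theorem forall_vertex_iff_forall_index {p : α → Prop} (hniso : ∀ u : α, ∃ u', Q.Adj u u')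
    (hcover : ∀ a b, Q.Adj a b → ∃ k, (x k = a ∧ y k = b) ∨ (x k = b ∧ y k = a)) :
    (∀ u, p u) ↔ ∀ k, p (x k) ∧ p (y k) := by
  refine ⟨fun h k => ⟨h _, h _⟩, fun h u => ?_⟩
  obtain ⟨u', hu'⟩ := hniso u
  obtain ⟨k, ⟨rfl, -⟩ | ⟨-, rfl⟩⟩ := hcover u u' hu'
  · exact (h k).1
  · exact (h k).2

theorem isLabeledHom_iff_forall_index {β SV SE : Type*} {G : SimpleGraph β}
    {LQv : α → SV} {LGv : β → SV} {LQe : Sym2 α → SE} {LGe : Sym2 β → SE} {M : α → β}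
    (hniso : ∀ u : α, ∃ u', Q.Adj u u') (hedges : ∀ k, Q.Adj (x k) (y k))
    (hcover : ∀ a b, Q.Adj a b → ∃ k, (x k = a ∧ y k = b) ∨ (x k = b ∧ y k = a)) :
    IsLabeledHom Q G LQv LGv LQe LGe M ↔
      ∀ k, G.Adj (M (x k)) (M (y k)) ∧ LQv (x k) = LGv (M (x k)) ∧
        LQv (y k) = LGv (M (y k)) ∧ LQe s(x k, y k) = LGe s(M (x k), M (y k)) := by
  have hsymm : ∀ u u', G.Adj (M u) (M u') ∧ LQe s(u, u') = LGe s(M u, M u') →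
      G.Adj (M u') (M u) ∧ LQe s(u', u) = LGe s(M u', M u) :=
    fun u u' ⟨hadj, hlab⟩ => ⟨hadj.symm, by rw [Sym2.eq_swap, hlab, Sym2.eq_swap]⟩
  rw [IsLabeledHom, forall_vertex_iff_forall_index hniso hcover,
    forall_adj_iff_forall_index hsymm hedges hcover, ← forall_and]
  exact forall_congr' fun k => by tauto

end EdgeEnumeration

theorem isLabeledHom_iff_of_isLabeledHom_supergraph {α β SV SE : Type*} {Q : SimpleGraph α}
    {G G' : SimpleGraph β} {LQv : α → SV} {LGv : β → SV} {LQe : Sym2 α → SE}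
    {LGe LG'e : Sym2 β → SE} {M : α → β}
    (hagree : ∀ v v' : β, G.Adj v v' → LGe s(v, v') = LG'e s(v, v'))
    (hM : IsLabeledHom Q G' LQv LGv LQe LG'e M) :
    IsLabeledHom Q G LQv LGv LQe LGe M ↔ ∀ u u', Q.Adj u u' → G.Adj (M u) (M u') :=
  ⟨fun h u u' huu' => (h.2 u u' huu').1, fun h =>
    ⟨hM.1, fun u u' huu' => ⟨h u u' huu', by rw [(hM.2 u u' huu').2, hagree _ _ (h u u' huu')]⟩⟩⟩

theorem insertion_incremental_matches_general
    {α β SV SE : Type*}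
    (Q : SimpleGraph α) (G G' : SimpleGraph β)
    (LQv : α → SV) (LGv : β → SV)
    (LQe : Sym2 α → SE) (LGe LG'e : Sym2 β → SE)
    (hniso : ∀ u : α, ∃ u', Q.Adj u u')
    (hagree : ∀ v v' : β, G.Adj v v' → LGe s(v, v') = LG'e s(v, v'))
    (n : ℕ) (x y : Fin n → α)
    (hedges : ∀ k, Q.Adj (x k) (y k))
    (hcover : ∀ a b, Q.Adj a b → ∃ k, (x k = a ∧ y k = b) ∨ (x k = b ∧ y k = a))
    (R DR : Fin n → Set (β × β)) (DQ : Fin n → Set (α → β))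
    (hR : ∀ k, R k = {p : β × β | G'.Adj p.1 p.2 ∧ LQv (x k) = LGv p.1 ∧
        LQv (y k) = LGv p.2 ∧ LQe s(x k, y k) = LG'e s(p.1, p.2)})
    (hDR : ∀ k, DR k = {p ∈ R k | G'.Adj p.1 p.2 ∧ ¬ G.Adj p.1 p.2})
    (hDQ : ∀ k, DQ k = {M : α → β |
        (∀ i, i < k → (M (x i), M (y i)) ∈ R i) ∧
        (M (x k), M (y k)) ∈ DR k ∧
        (∀ i, k < i → (M (x i), M (y i)) ∈ R i \ DR i)}) :
    (⋃ k, DQ k) = {M : α → β | IsLabeledHom Q G' LQv LGv LQe LG'e M ∧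
        ¬ IsLabeledHom Q G LQv LGv LQe LGe M} ∧
    Pairwise (Function.onFun Disjoint DQ) := by
  have hmem_DQ : ∀ k M, M ∈ DQ k ↔ IsLastMarked (fun i => (M (x i), M (y i)) ∈ R i)
      (fun i => (M (x i), M (y i)) ∈ DR i) k := fun k M => by rw [hDQ k]; rfl
  have hDR_R : ∀ k p, p ∈ DR k → p ∈ R k := fun k p hp => by rw [hDR] at hp; exact hp.1
  have hhom_G' : ∀ M : α → β,
      IsLabeledHom Q G' LQv LGv LQe LG'e M ↔ ∀ i, (M (x i), M (y i)) ∈ R i := fun M => by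
    simp only [hR, Set.mem_ofPred_eq]
    exact isLabeledHom_iff_forall_index hniso hedges hcover
  refine ⟨Set.ext fun M => ?_, fun j k hjk => Set.disjoint_left.2 fun M hj hk => ?_⟩
  · rw [Set.mem_iUnion, Set.mem_ofPred_eq]
    simp only [hmem_DQ]
    rw [IsLastMarked.exists_iff fun i => hDR_R i _, hhom_G']
    refine and_congr_right fun hall => ?_
    have hM := (hhom_G' M).2 hall
    rw [isLabeledHom_iff_of_isLabeledHom_supergraph hagree hM,
      forall_adj_iff_forall_index (fun _ _ h => h.symm) hedges hcover]
    simp only [hDR, Set.mem_ofPred_eq, hall, true_and, not_forall]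
    exact exists_congr fun i => and_iff_right_of_imp fun _ => (hM.2 _ _ (hedges i)).1
  · exact hjk (((hmem_DQ j M).1 hj).unique ((hmem_DQ k M).1 hk))

/-- On an edge insertion `Δ = E(G') \ E(G)`, the union of the
incremental join terms `ΔQ_k` is exactly the set of positive matches (homomorphisms
of `Q` in `G'` that are not homomorphisms of `Q` in `G`), and the `ΔQ_k` are
pairwise disjoint. -/
theorem insertion_incremental_matches
    {α β SV SE : Type*} [Fintype α] [Fintype β]
    (Q : SimpleGraph α) (G G' : SimpleGraph β)
    (LQv : α → SV) (LGv : β → SV)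
    (LQe : Sym2 α → SE) (LGe LG'e : Sym2 β → SE)
    (hniso : ∀ u : α, ∃ u', Q.Adj u u')
    (hsub : G ≤ G')
    (hagree : ∀ v v' : β, G.Adj v v' → LGe s(v, v') = LG'e s(v, v'))
    (n : ℕ) (x y : Fin n → α)
    (hedges : ∀ k, Q.Adj (x k) (y k))
    (hcover : ∀ a b, Q.Adj a b → ∃ k, (x k = a ∧ y k = b) ∨ (x k = b ∧ y k = a))
    (R DR : Fin n → Set (β × β)) (DQ : Fin n → Set (α → β))
    (hR : ∀ k, R k = {p : β × β | G'.Adj p.1 p.2 ∧ LQv (x k) = LGv p.1 ∧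
        LQv (y k) = LGv p.2 ∧ LQe s(x k, y k) = LG'e s(p.1, p.2)})
    (hDR : ∀ k, DR k = {p ∈ R k | G'.Adj p.1 p.2 ∧ ¬ G.Adj p.1 p.2})
    (hDQ : ∀ k, DQ k = {M : α → β |
        (∀ i, i < k → (M (x i), M (y i)) ∈ R i) ∧
        (M (x k), M (y k)) ∈ DR k ∧
        (∀ i, k < i → (M (x i), M (y i)) ∈ R i \ DR i)}) :
    (⋃ k, DQ k) = {M : α → β | IsLabeledHom Q G' LQv LGv LQe LG'e M ∧
        ¬ IsLabeledHom Q G LQv LGv LQe LGe M} ∧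
    Pairwise (Function.onFun Disjoint DQ) :=
  insertion_incremental_matches_general Q G G' LQv LGv LQe LGe LG'e hniso hagree n x y hedges hcover
    R DR DQ hR hDR hDQ
end

section
/- Let Q be a query graph with no isolated vertices, and let G and G' be data graphs on the same vertex set with the same vertex labeling, E(G') ⊆ E(G), identical edge labels on common edges, and Δ = E(G) \ E(G') the deleted edges. Fix an enumeration e_1,…,e_n of E(Q) with e_k = {x_k,y_k}; let R_k = {(v,v') : {v,v'} ∈ E(G), L(x_k)=L(v), L(y_k)=L(v'), L(e_k)=L({v,v'})} and ΔR_k = {(v,v') ∈ R_k : {v,v'} ∈ Δ}. For each k let ΔQ_k be the set of maps M : V(Q) → V(G) with (M(x_i),M(y_i)) ∈ R_i for all i < k, (M(x_k),M(y_k)) ∈ ΔR_k, and (M(x_i),M(y_i)) ∈ R_i \ ΔR_i for all i > k. Then ⋃_{k=1}^{n} ΔQ_k equals the set of homomorphisms of Q in G that are not homomorphisms of Q in G' (the negative matches), and the sets ΔQ_k are pairwise disjoint. -/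
/-!
Each negative match `M` maps every query edge `e_i` into `R_i`, and at least one of them into the
deleted part `ΔR_i`; it lies in `ΔQ_k` exactly for the largest such index `k`. Hence the `ΔQ_k`
cover the negative matches, and they are disjoint because a map in `ΔQ_j ∩ ΔQ_k` with `j < k`
would send `e_k` both into `ΔR_k` and outside it.
-/

section IncrementalTerm

variable {ι γ : Type*} [LinearOrder ι]

/-- The paper's `ΔQ_k`, with `A i` the maps sending `e_i` into `R_i` and `B i` those sending it
into `ΔR_i`. -/
def incrementalTerm (A B : ι → Set γ) (k : ι) : Set γ :=
  {M | (∀ i < k, M ∈ A i) ∧ M ∈ B k ∧ ∀ i, k < i → M ∈ A i \ B i}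

theorem pairwise_disjoint_incrementalTerm (A B : ι → Set γ) :
    Pairwise (Function.onFun Disjoint (incrementalTerm A B)) := by
  intro j k hjk
  rw [Function.onFun, Set.disjoint_left]
  rintro M ⟨-, hj, hafter_j⟩ ⟨-, hk, hafter_k⟩
  rcases hjk.lt_or_gt with h | h
  · exact (hafter_j k h).2 hk
  · exact (hafter_k j h).2 hj

theorem iUnion_incrementalTerm [WellFoundedGT ι] {A B : ι → Set γ} (hBA : ∀ i, B i ⊆ A i) :
    (⋃ k, incrementalTerm A B k) = (⋂ i, A i) ∩ ⋃ i, B i := by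
  ext M
  simp only [Set.mem_iUnion, Set.mem_inter_iff, Set.mem_iInter]
  constructor
  · rintro ⟨k, hbefore, hk, hafter⟩
    refine ⟨fun i => ?_, k, hk⟩
    rcases lt_trichotomy i k with h | rfl | h
    · exact hbefore i h
    · exact hBA i hk
    · exact (hafter i h).1
  · rintro ⟨hA, hB⟩
    obtain ⟨k, hk, hmax⟩ := wellFounded_gt.has_min {i | M ∈ B i} hB
    exact ⟨k, fun i _ => hA i, hk, fun i hki => ⟨hA i, fun hi => hmax i hi hki⟩⟩

end IncrementalTerm

section LabeledHom

variable {α β SV SE : Type*} {Q : SimpleGraph α} {G : SimpleGraph β}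
  {LQv : α → SV} {LGv : β → SV} {LQe : Sym2 α → SE} {LGe : Sym2 β → SE}

def MatchesEdge (G : SimpleGraph β) (LQv : α → SV) (LGv : β → SV) (LQe : Sym2 α → SE)
    (LGe : Sym2 β → SE) (a b : α) (v w : β) : Prop :=
  G.Adj v w ∧ LQv a = LGv v ∧ LQv b = LGv w ∧ LQe s(a, b) = LGe s(v, w)

theorem MatchesEdge.symm {a b : α} {v w : β} (h : MatchesEdge G LQv LGv LQe LGe a b v w) :
    MatchesEdge G LQv LGv LQe LGe b a w v := by
  obtain ⟨hadj, ha, hb, he⟩ := h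
  exact ⟨hadj.symm, hb, ha, by rwa [Sym2.eq_swap, Sym2.eq_swap (a := w)]⟩

theorem isLabeledHom_iff_forall_adj (hniso : ∀ u : α, ∃ u', Q.Adj u u') (M : α → β) :
    IsLabeledHom Q G LQv LGv LQe LGe M ↔
      ∀ a b, Q.Adj a b → MatchesEdge G LQv LGv LQe LGe a b (M a) (M b) := by
  constructor
  · rintro ⟨hv, he⟩ a b hab
    exact ⟨(he a b hab).1, hv a, hv b, (he a b hab).2⟩
  · intro h
    refine ⟨fun u => ?_, fun a b hab => ⟨(h a b hab).1, (h a b hab).2.2.2⟩⟩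
    obtain ⟨u', hu⟩ := hniso u
    exact (h u u' hu).2.1

theorem SimpleGraph.forall_adj_iff_of_cover {ι : Type*} {P : α → α → Prop}
    (hP : ∀ a b, P a b → P b a) {x y : ι → α} (hedges : ∀ k, Q.Adj (x k) (y k))
    (hcover : ∀ a b, Q.Adj a b → ∃ k, (x k = a ∧ y k = b) ∨ (x k = b ∧ y k = a)) :
    (∀ a b, Q.Adj a b → P a b) ↔ ∀ k, P (x k) (y k) := by
  refine ⟨fun h k => h _ _ (hedges k), fun h a b hab => ?_⟩
  obtain ⟨k, ⟨rfl, rfl⟩ | ⟨rfl, rfl⟩⟩ := hcover a b hab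
  · exact h k
  · exact hP _ _ (h k)

theorem isLabeledHom_iff_forall_adj_of_isLabeledHom (hniso : ∀ u : α, ∃ u', Q.Adj u u')
    {G' : SimpleGraph β} {LG'e : Sym2 β → SE}
    (hagree : ∀ v v' : β, G'.Adj v v' → LG'e s(v, v') = LGe s(v, v')) {M : α → β}
    (hM : IsLabeledHom Q G LQv LGv LQe LGe M) :
    IsLabeledHom Q G' LQv LGv LQe LG'e M ↔ ∀ a b, Q.Adj a b → G'.Adj (M a) (M b) := by
  rw [isLabeledHom_iff_forall_adj hniso] at hM ⊢
  refine ⟨fun h a b hab => (h a b hab).1, fun h a b hab => ?_⟩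
  obtain ⟨-, ha, hb, he⟩ := hM a b hab
  exact ⟨h a b hab, ha, hb, by rw [hagree _ _ (h a b hab)]; exact he⟩

end LabeledHom

theorem deletion_incremental_matches_general
    {α β SV SE : Type*}
    (Q : SimpleGraph α) (G G' : SimpleGraph β)
    (LQv : α → SV) (LGv : β → SV)
    (LQe : Sym2 α → SE) (LGe LG'e : Sym2 β → SE)
    (hniso : ∀ u : α, ∃ u', Q.Adj u u')
    (hagree : ∀ v v' : β, G'.Adj v v' → LG'e s(v, v') = LGe s(v, v'))
    (n : ℕ) (x y : Fin n → α)
    (hedges : ∀ k, Q.Adj (x k) (y k))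
    (hcover : ∀ a b, Q.Adj a b → ∃ k, (x k = a ∧ y k = b) ∨ (x k = b ∧ y k = a))
    (R DR : Fin n → Set (β × β)) (DQ : Fin n → Set (α → β))
    (hR : ∀ k, R k = {p : β × β | G.Adj p.1 p.2 ∧ LQv (x k) = LGv p.1 ∧
        LQv (y k) = LGv p.2 ∧ LQe s(x k, y k) = LGe s(p.1, p.2)})
    (hDR : ∀ k, DR k = {p ∈ R k | G.Adj p.1 p.2 ∧ ¬ G'.Adj p.1 p.2})
    (hDQ : ∀ k, DQ k = {M : α → β |
        (∀ i, i < k → (M (x i), M (y i)) ∈ R i) ∧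
        (M (x k), M (y k)) ∈ DR k ∧
        (∀ i, k < i → (M (x i), M (y i)) ∈ R i \ DR i)}) :
    (⋃ k, DQ k) = {M : α → β | IsLabeledHom Q G LQv LGv LQe LGe M ∧
        ¬ IsLabeledHom Q G' LQv LGv LQe LG'e M} ∧
    Pairwise (Function.onFun Disjoint DQ) := by
  set edgeImage : Fin n → (α → β) → β × β := fun i M => (M (x i), M (y i))
  have hDQ_eq :
      DQ = incrementalTerm (fun i => edgeImage i ⁻¹' R i) (fun i => edgeImage i ⁻¹' DR i) :=
    funext fun k => by rw [hDQ]; rfl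
  have hDR_sub : ∀ i, edgeImage i ⁻¹' DR i ⊆ edgeImage i ⁻¹' R i := fun i M hM => by
    rw [Set.mem_preimage, hDR] at hM
    exact hM.1
  have hR_iff : ∀ M, IsLabeledHom Q G LQv LGv LQe LGe M ↔ ∀ i, edgeImage i M ∈ R i := by
    intro M
    simp only [isLabeledHom_iff_forall_adj hniso, SimpleGraph.forall_adj_iff_of_cover
      (fun _ _ h => MatchesEdge.symm h) hedges hcover, hR]
    rfl
  have hDR_iff : ∀ M, IsLabeledHom Q G LQv LGv LQe LGe M →
      (¬ IsLabeledHom Q G' LQv LGv LQe LG'e M ↔ ∃ i, edgeImage i M ∈ DR i) := by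
    intro M hM
    rw [isLabeledHom_iff_forall_adj_of_isLabeledHom hniso hagree hM,
      SimpleGraph.forall_adj_iff_of_cover (fun _ _ h => h.symm) hedges hcover]
    simp only [hDR, not_forall]
    exact exists_congr fun i =>
      ⟨fun h => ⟨(hR_iff M).1 hM i, (hM.2 _ _ (hedges i)).1, h⟩, fun h => h.2.2⟩
  refine ⟨?_, hDQ_eq ▸ pairwise_disjoint_incrementalTerm _ _⟩
  rw [hDQ_eq, iUnion_incrementalTerm hDR_sub]
  ext M
  simp only [Set.mem_inter_iff, Set.mem_iInter, Set.mem_iUnion, Set.mem_preimage,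
    Set.mem_ofPred_eq, ← hR_iff]
  exact and_congr_right fun hM => (hDR_iff M hM).symm

/-- On an edge deletion `Δ = E(G) \ E(G')`, the union of the
incremental join terms `ΔQ_k` is exactly the set of negative matches (homomorphisms
of `Q` in `G` that are not homomorphisms of `Q` in `G'`), and the `ΔQ_k` are
pairwise disjoint. -/
theorem deletion_incremental_matches
    {α β SV SE : Type*} [Fintype α] [Fintype β]
    (Q : SimpleGraph α) (G G' : SimpleGraph β)
    (LQv : α → SV) (LGv : β → SV)
    (LQe : Sym2 α → SE) (LGe LG'e : Sym2 β → SE)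
    (hniso : ∀ u : α, ∃ u', Q.Adj u u')
    (hsub : G' ≤ G)
    (hagree : ∀ v v' : β, G'.Adj v v' → LG'e s(v, v') = LGe s(v, v'))
    (n : ℕ) (x y : Fin n → α)
    (hedges : ∀ k, Q.Adj (x k) (y k))
    (hcover : ∀ a b, Q.Adj a b → ∃ k, (x k = a ∧ y k = b) ∨ (x k = b ∧ y k = a))
    (R DR : Fin n → Set (β × β)) (DQ : Fin n → Set (α → β))
    (hR : ∀ k, R k = {p : β × β | G.Adj p.1 p.2 ∧ LQv (x k) = LGv p.1 ∧
        LQv (y k) = LGv p.2 ∧ LQe s(x k, y k) = LGe s(p.1, p.2)})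
    (hDR : ∀ k, DR k = {p ∈ R k | G.Adj p.1 p.2 ∧ ¬ G'.Adj p.1 p.2})
    (hDQ : ∀ k, DQ k = {M : α → β |
        (∀ i, i < k → (M (x i), M (y i)) ∈ R i) ∧
        (M (x k), M (y k)) ∈ DR k ∧
        (∀ i, k < i → (M (x i), M (y i)) ∈ R i \ DR i)}) :
    (⋃ k, DQ k) = {M : α → β | IsLabeledHom Q G LQv LGv LQe LGe M ∧
        ¬ IsLabeledHom Q G' LQv LGv LQe LG'e M} ∧
    Pairwise (Function.onFun Disjoint DQ) :=
  deletion_incremental_matches_general Q G G' LQv LGv LQe LGe LG'e hniso hagree n x y hedges hcover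
    R DR DQ hR hDR hDQ
end

section
/- Let Q and G be labeled graphs and let C assign to every u ∈ V(Q) a set C(u) ⊆ V(G) that is arc-consistent: for every u ∈ V(Q) and v ∈ C(u), L(v) = L(u), and for every neighbor u' of u in Q there exists v' ∈ C(u') with {v,v'} ∈ E(G) and L({u,u'}) = L({v,v'}). Then for every u ∈ V(Q), every v ∈ C(u), and every path P that is a subgraph of Q with u as an endpoint, there exists a homomorphism M of P in G with M(u) = v and M(w) ∈ C(w) for every vertex w of P. (Hence candidates satisfying the SM filtering condition satisfy SymBi's condition, which in turn implies TurboFlux's and IEDyn's conditions.) -/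
/-!
Induction on the path, extending a match from the tail. Arc consistency at the first vertex
`u` with candidate `v` yields a candidate `v'` of the next vertex joined to `v` by an edge with
the right label; a match of the tail sending the next vertex to `v'` is then redirected at `u`
to `v`. Since a path does not revisit `u`, this redirection leaves the tail untouched.
-/

namespace SimpleGraph.Walk

variable {α β SV SE : Type*} {Q : SimpleGraph α} {G : SimpleGraph β}
  {Lv : α → SV} {LGv : β → SV} {Le : Sym2 α → SE} {LGe : Sym2 β → SE} {C : α → Set β}

theorem exists_candidate_match_of_isPath
    (hlabel : ∀ u : α, ∀ v ∈ C u, LGv v = Lv u)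
    (harc : ∀ u : α, ∀ v ∈ C u, ∀ u' : α, Q.Adj u u' →
      ∃ v' ∈ C u', G.Adj v v' ∧ Le s(u, u') = LGe s(v, v'))
    {u w : α} {p : Q.Walk u w} (hp : p.IsPath) {v : β} (hv : v ∈ C u) :
    ∃ M : α → β, M u = v ∧ (∀ a ∈ p.support, Lv a = LGv (M a) ∧ M a ∈ C a) ∧
      ∀ a b : α, s(a, b) ∈ p.edges → G.Adj (M a) (M b) ∧ Le s(a, b) = LGe s(M a, M b) := by
  classical
  induction p generalizing v with
  | nil =>
    refine ⟨fun _ => v, rfl, ?_, by simp⟩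
    simpa using ⟨(hlabel _ v hv).symm, hv⟩
  | @cons u u' w h q ih =>
    obtain ⟨v', hv', hadj, hle⟩ := harc u v hv u' h
    obtain ⟨M, rfl, hvert, hedge⟩ := ih hp.of_cons hv'
    have hu : u ∉ q.support := ((cons_isPath_iff h q).1 hp).2
    have hfix : ∀ a ∈ q.support, Function.update M u v a = M a := fun a ha =>
      Function.update_of_ne (ne_of_mem_of_not_mem ha hu) _ _
    have hu' : Function.update M u v u' = M u' := hfix u' q.start_mem_support
    refine ⟨Function.update M u v, Function.update_self _ _ _, ?_, ?_⟩
    · intro a ha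
      rcases List.mem_cons.1 ha with rfl | ha
      · simpa using ⟨(hlabel _ v hv).symm, hv⟩
      · rw [hfix a ha]
        exact hvert a ha
    · intro a b hab
      rcases List.mem_cons.1 hab with hab | hab
      · rcases Sym2.eq_iff.1 hab with ⟨rfl, rfl⟩ | ⟨rfl, rfl⟩
        · rw [hu', Function.update_self]
          exact ⟨hadj, hle⟩
        · rw [hu', Function.update_self, Sym2.eq_swap, hle, Sym2.eq_swap]
          exact ⟨hadj.symm, rfl⟩
      · rw [hfix a (q.fst_mem_support_of_mem_edges hab),
          hfix b (q.snd_mem_support_of_mem_edges hab)]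
        exact hedge a b hab

end SimpleGraph.Walk

theorem arc_consistent_implies_path_matches_general
    {α β SV SE : Type*}
    (Q : SimpleGraph α) (G : SimpleGraph β)
    (Lv : α → SV) (LGv : β → SV) (Le : Sym2 α → SE) (LGe : Sym2 β → SE)
    (C : α → Set β)
    (hlabel : ∀ u : α, ∀ v ∈ C u, LGv v = Lv u)
    (harc : ∀ u : α, ∀ v ∈ C u, ∀ u' : α, Q.Adj u u' →
      ∃ v' ∈ C u', G.Adj v v' ∧ Le s(u, u') = LGe s(v, v'))
    (u : α) (v : β) (hv : v ∈ C u) :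
    ∀ (w : α) (p : Q.Walk u w), p.IsPath →
      ∃ M : α → β, M u = v ∧ (∀ a ∈ p.support, Lv a = LGv (M a) ∧ M a ∈ C a) ∧
        ∀ a b : α, s(a, b) ∈ p.edges →
          G.Adj (M a) (M b) ∧ Le s(a, b) = LGe s(M a, M b) :=
  fun _ _ hp => SimpleGraph.Walk.exists_candidate_match_of_isPath hlabel harc hp hv

/-- given arc-consistent candidate sets `C`, every `v ∈ C u` and every
path `p` in `Q` with endpoint `u` admit a homomorphism `M` of `p` in `G` with
`M u = v` and `M w ∈ C w` for every vertex `w` of `p`. -/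
theorem arc_consistent_implies_path_matches
    {α β SV SE : Type*} [Fintype α] [Fintype β]
    (Q : SimpleGraph α) (G : SimpleGraph β)
    (Lv : α → SV) (LGv : β → SV) (Le : Sym2 α → SE) (LGe : Sym2 β → SE)
    (C : α → Set β)
    (hlabel : ∀ u : α, ∀ v ∈ C u, LGv v = Lv u)
    (harc : ∀ u : α, ∀ v ∈ C u, ∀ u' : α, Q.Adj u u' →
      ∃ v' ∈ C u', G.Adj v v' ∧ Le s(u, u') = LGe s(v, v'))
    (u : α) (v : β) (hv : v ∈ C u) :
    ∀ (w : α) (p : Q.Walk u w), p.IsPath →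
      ∃ M : α → β, M u = v ∧ (∀ a ∈ p.support, Lv a = LGv (M a) ∧ M a ∈ C a) ∧
        ∀ a b : α, s(a, b) ∈ p.edges →
          G.Adj (M a) (M b) ∧ Le s(a, b) = LGe s(M a, M b) :=
  arc_consistent_implies_path_matches_general Q G Lv LGv Le LGe C hlabel harc u v hv
end

section
/- Let Q be a query graph that is a tree and G a data graph, and let C assign to every u ∈ V(Q) a set C(u) ⊆ V(G) that is arc-consistent: for every u ∈ V(Q) and v ∈ C(u), L(v) = L(u), and for every neighbor u' of u in Q there exists v' ∈ C(u') with {v,v'} ∈ E(G) and L({u,u'}) = L({v,v'}). Then for every u ∈ V(Q) and every v ∈ C(u), there exists a homomorphism M of Q in G with M(u) = v and M(w) ∈ C(w) for every w ∈ V(Q). (This is the paper's proposition that, for tree queries, candidate sets produced by the modified bottom-up/top-down pruning procedure contain only vertices appearing in matches; it holds under homomorphism semantics.) -/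
namespace SimpleGraph

variable {α β : Type*} {Q : SimpleGraph α} {C : α → Set β} {R : α → α → β → β → Prop}

/-- `R a b x y` is the constraint on the images `x, y` of the endpoints of an edge `ab`. -/
def ArcConsistent (Q : SimpleGraph α) (C : α → Set β) (R : α → α → β → β → Prop) : Prop :=
  ∀ a, ∀ x ∈ C a, ∀ b, Q.Adj a b → ∃ y ∈ C b, R a b x y

noncomputable def ArcConsistent.propagate (hC : Q.ArcConsistent C R) {u w : α}
    (p : Q.Walk u w) : C u → C w :=
  p.concatRec (motive := fun a b _ => C a → C b) id fun _ hab ih x =>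
    ⟨(hC _ _ (ih x).2 _ hab).choose, (hC _ _ (ih x).2 _ hab).choose_spec.1⟩

theorem ArcConsistent.propagate_nil (hC : Q.ArcConsistent C R) {u : α} (x : C u) :
    hC.propagate Walk.nil x = x :=
  rfl

theorem ArcConsistent.rel_propagate_concat (hC : Q.ArcConsistent C R) {u a b : α}
    (p : Q.Walk u a) (hab : Q.Adj a b) (x : C u) :
    R a b (hC.propagate p x) (hC.propagate (p.concat hab) x) := by
  simp only [propagate, Walk.concatRec_concat]
  exact (hC a _ (Subtype.prop _) b hab).choose_spec.2

theorem IsAcyclic.eq_concat_or_eq_concat (hQ : Q.IsAcyclic) {u a b : α} {p : Q.Walk u a}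
    {q : Q.Walk u b} (hp : p.IsPath) (hq : q.IsPath) (hab : Q.Adj a b) :
    q = p.concat hab ∨ p = q.concat hab.symm := by
  by_cases ha : a ∈ q.support
  · exact .inl (hQ.path_concat hp hq hab ha)
  · exact .inr (hQ.path_concat hq hp hab.symm
      (hQ.mem_support_of_ne_mem_support_of_adj_of_isPath hp hq hab ha))

theorem ArcConsistent.exists_extension (hQ : Q.IsTree) (hC : Q.ArcConsistent C R)
    (hR : ∀ a b x y, R a b x y → R b a y x) {u : α} {v : β} (hv : v ∈ C u) :
    ∃ M : α → β, M u = v ∧ (∀ w, M w ∈ C w) ∧ ∀ a b, Q.Adj a b → R a b (M a) (M b) := by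
  choose P hP using fun w => (hQ.existsUnique_path u w).exists
  have hPu : P u = Walk.nil := (hQ.existsUnique_path u u).unique (hP u) Walk.IsPath.nil
  refine ⟨fun w => hC.propagate (P w) ⟨v, hv⟩, by simp only [hPu, propagate_nil],
    fun w => (hC.propagate (P w) ⟨v, hv⟩).2, fun a b hab => ?_⟩
  rcases hQ.isAcyclic.eq_concat_or_eq_concat (hP a) (hP b) hab with h | h
  · simpa only [h] using hC.rel_propagate_concat (P a) hab ⟨v, hv⟩
  · exact hR _ _ _ _ (by simpa only [h] using hC.rel_propagate_concat (P b) hab.symm ⟨v, hv⟩)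

end SimpleGraph

theorem tree_arc_consistent_candidates_in_matches_general
    {α β SV SE : Type*}
    (Q : SimpleGraph α) (G : SimpleGraph β)
    (Lv : α → SV) (LGv : β → SV) (Le : Sym2 α → SE) (LGe : Sym2 β → SE)
    (htree : Q.IsTree)
    (C : α → Set β)
    (hlabel : ∀ u : α, ∀ v ∈ C u, LGv v = Lv u)
    (harc : ∀ u : α, ∀ v ∈ C u, ∀ u' : α, Q.Adj u u' →
      ∃ v' ∈ C u', G.Adj v v' ∧ Le s(u, u') = LGe s(v, v'))
    (u : α) (v : β) (hv : v ∈ C u) :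
    ∃ M : α → β, IsLabeledHom Q G Lv LGv Le LGe M ∧ M u = v ∧ ∀ w : α, M w ∈ C w := by
  have hsymm : ∀ a b x y, G.Adj x y ∧ Le s(a, b) = LGe s(x, y) →
      G.Adj y x ∧ Le s(b, a) = LGe s(y, x) := fun a b x y ⟨hxy, he⟩ =>
    ⟨hxy.symm, by rwa [Sym2.eq_swap, Sym2.eq_swap (a := y)]⟩
  obtain ⟨M, hMu, hMC, hMadj⟩ :=
    SimpleGraph.ArcConsistent.exists_extension (C := C) htree harc hsymm hv
  exact ⟨M, ⟨fun w => (hlabel w (M w) (hMC w)).symm, hMadj⟩, hMu, hMC⟩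

/-- for a tree query `Q` with arc-consistent candidate sets `C`, every
`v ∈ C u` appears in a (homomorphism-semantics) match of `Q` in `G` that maps `u`
to `v` and stays inside the candidate sets. -/
theorem tree_arc_consistent_candidates_in_matches
    {α β SV SE : Type*} [Fintype α] [Fintype β]
    (Q : SimpleGraph α) (G : SimpleGraph β)
    (Lv : α → SV) (LGv : β → SV) (Le : Sym2 α → SE) (LGe : Sym2 β → SE)
    (htree : Q.IsTree)
    (C : α → Set β)
    (hlabel : ∀ u : α, ∀ v ∈ C u, LGv v = Lv u)
    (harc : ∀ u : α, ∀ v ∈ C u, ∀ u' : α, Q.Adj u u' →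
      ∃ v' ∈ C u', G.Adj v v' ∧ Le s(u, u') = LGe s(v, v'))
    (u : α) (v : β) (hv : v ∈ C u) :
    ∃ M : α → β, IsLabeledHom Q G Lv LGv Le LGe M ∧ M u = v ∧ ∀ w : α, M w ∈ C w :=
  tree_arc_consistent_candidates_in_matches_general Q G Lv LGv Le LGe htree C hlabel harc u v hv
end
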